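/- arXiv:2502.18788 — 2 statements merged into one kernel-verified Lean document; each statement's English description precedes it below -/
import Mathlib

section
/- Let 0 < r ≤ p ≤ 1. The map g : ℂ → ℂ defined by g(z) = |z|^{(p/r)−1} z for z ≠ 0 and g(0) = 0 maps S_r onto S_p, i.e., g(S_r) = S_p, and its restriction to the closed disk centered at 0 of radius (2π)^{-r} (which contains S_r) is Lipschitz: there is C > 0 with |g(z) − g(w)| ≤ C|z − w| for all z, w in this disk. In particular, there exists a surjective Lipschitz map from S_r onto S_p. -/
/-- The parametrizing map `t ↦ φ(t) e^{it}` of a spiral. -/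
noncomputable def spiralMap (φ : ℝ → ℝ) : ℝ → ℂ :=
  fun t => (φ t : ℂ) * Complex.exp (t * Complex.I)

/-- The spiral `S_φ = {φ(t) e^{it} : t ∈ [2π, ∞)} ∪ {0}`. -/
noncomputable def spiral (φ : ℝ → ℝ) : Set ℂ :=
  spiralMap φ '' Set.Ici (2 * Real.pi) ∪ {0}

/-- The polynomial spiral `S_p = {t^{-p} e^{it} : t ∈ [2π, ∞)} ∪ {0}`. -/
noncomputable def polySpiral (p : ℝ) : Set ℂ :=
  spiral (fun t => t ^ (-p))

/-!
The stretch `z ↦ |z|^α z` with `α = p/r - 1` keeps the argument of `t^{-r} e^{it}` and raises its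
modulus to the power `p/r`, so it carries `S_r` onto `S_p`. For the Lipschitz bound with
`|w| ≤ |z| ≤ R` write `g z - g w = |z|^α (z - w) + (|z|^α - |w|^α) w`; the first term is at most
`R^α |z - w|`, and Bernoulli's inequality for the exponent `1 + α ≥ 1` bounds the second by
`α R^α (|z| - |w|) ≤ α R^α |z - w|`.
-/

open Real

/-- Bernoulli's inequality `u^{1+α} ≥ 1 + (1+α)(u-1)` at `u = b/a`, multiplied out by `a^{1+α}`. -/
lemma rpow_sub_rpow_mul_le {α a b : ℝ} (hα : 0 ≤ α) (hb : 0 ≤ b) (hba : b ≤ a) :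
    (a ^ α - b ^ α) * b ≤ α * a ^ α * (a - b) := by
  rcases (hb.trans hba).eq_or_lt with rfl | ha
  · simp [le_antisymm hba hb]
  have hne : 1 + α ≠ 0 := by linarith
  have hbernoulli : 1 + (1 + α) * (b / a - 1) ≤ (b / a) ^ (1 + α) := by
    simpa using one_add_mul_self_le_rpow_one_add (s := b / a - 1)
      (by linarith [div_nonneg hb ha.le]) (by linarith : 1 ≤ 1 + α)
  have hscaled := mul_le_mul_of_nonneg_right hbernoulli (rpow_nonneg ha.le (1 + α))
  rw [← mul_rpow (div_nonneg hb ha.le) ha.le, div_mul_cancel₀ b ha.ne', rpow_one_add' hb hne,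
    rpow_one_add' ha.le hne] at hscaled
  have hdiv : (1 + (1 + α) * (b / a - 1)) * (a * a ^ α) = a * a ^ α + (1 + α) * (b - a) * a ^ α := by
    field_simp
  linarith

section RadialStretch

variable {E : Type*} [NormedAddCommGroup E] [NormedSpace ℝ E]

noncomputable def radialStretch (α : ℝ) (x : E) : E :=
  ‖x‖ ^ α • x

lemma norm_radialStretch_sub_le_of_norm_le {α : ℝ} (hα : 0 ≤ α) {x y : E} (hyx : ‖y‖ ≤ ‖x‖) :
    ‖radialStretch α x - radialStretch α y‖ ≤ (1 + α) * ‖x‖ ^ α * ‖x - y‖ := by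
  have hdecomp : radialStretch α x - radialStretch α y =
      ‖x‖ ^ α • (x - y) + (‖x‖ ^ α - ‖y‖ ^ α) • y := by
    simp only [radialStretch, smul_sub, sub_smul]
    abel
  have hpow : ‖y‖ ^ α ≤ ‖x‖ ^ α := rpow_le_rpow (norm_nonneg y) hyx hα
  have hsplit : ‖radialStretch α x - radialStretch α y‖ ≤
      ‖x‖ ^ α * ‖x - y‖ + (‖x‖ ^ α - ‖y‖ ^ α) * ‖y‖ := by
    rw [hdecomp]
    refine (norm_add_le _ _).trans_eq ?_
    rw [norm_smul, norm_smul, Real.norm_of_nonneg (rpow_nonneg (norm_nonneg x) α),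
      Real.norm_of_nonneg (sub_nonneg.mpr hpow)]
  have hbernoulli := rpow_sub_rpow_mul_le hα (norm_nonneg y) hyx
  have hnorms : α * ‖x‖ ^ α * (‖x‖ - ‖y‖) ≤ α * ‖x‖ ^ α * ‖x - y‖ :=
    mul_le_mul_of_nonneg_left (norm_sub_norm_le x y) (by positivity)
  linarith

lemma norm_radialStretch_sub_le {α R : ℝ} (hα : 0 ≤ α) {x y : E} (hx : ‖x‖ ≤ R) (hy : ‖y‖ ≤ R) :
    ‖radialStretch α x - radialStretch α y‖ ≤ (1 + α) * R ^ α * ‖x - y‖ := by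
  wlog hyx : ‖y‖ ≤ ‖x‖ generalizing x y
  · rw [norm_sub_rev, norm_sub_rev x]
    exact this hy hx (le_of_not_ge hyx)
  refine (norm_radialStretch_sub_le_of_norm_le hα hyx).trans ?_
  gcongr

end RadialStretch

lemma norm_spiralMap (φ : ℝ → ℝ) (t : ℝ) : ‖spiralMap φ t‖ = |φ t| := by
  simp [spiralMap]

lemma radialStretch_spiralMap_rpow {p r t : ℝ} (hr : r ≠ 0) (ht : 0 < t) :
    radialStretch (p / r - 1) (spiralMap (fun s => s ^ (-r)) t) = spiralMap (fun s => s ^ (-p)) t := by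
  have hexp : -r * (p / r - 1) + -r = -p := by field_simp; ring
  rw [radialStretch, norm_spiralMap, abs_of_pos (rpow_pos_of_pos ht _), spiralMap, spiralMap,
    Complex.real_smul, ← mul_assoc, ← Complex.ofReal_mul, ← rpow_mul ht.le, ← rpow_add ht, hexp]

lemma image_radialStretch_polySpiral {p r : ℝ} (hr : r ≠ 0) :
    radialStretch (p / r - 1) '' polySpiral r = polySpiral p := by
  have hpos : ∀ t ∈ Set.Ici (2 * π), 0 < t := fun t ht => lt_of_lt_of_le (by positivity) ht
  rw [polySpiral, polySpiral, spiral, spiral, Set.image_union, Set.image_singleton, Set.image_image]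
  simp only [radialStretch, norm_zero, smul_zero]
  congr 1
  exact Set.image_congr fun t ht => radialStretch_spiralMap_rpow hr (hpos t ht)

lemma polySpiral_subset_closedBall {r : ℝ} (hr : 0 ≤ r) :
    polySpiral r ⊆ Metric.closedBall 0 ((2 * π) ^ (-r)) := by
  rintro z (⟨t, ht, rfl⟩ | rfl)
  · have ht0 : 0 < t := lt_of_lt_of_le (by positivity) ht
    rw [mem_closedBall_zero_iff, norm_spiralMap, abs_of_pos (rpow_pos_of_pos ht0 _)]
    exact rpow_le_rpow_of_nonpos (by positivity) ht (neg_nonpos.mpr hr)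
  · exact Metric.mem_closedBall_self (by positivity)

theorem radialStretch_lipschitz_maps_polySpiral_general (p r : ℝ) (hr : 0 < r) (hrp : r ≤ p)
    (g : ℂ → ℂ) (hg0 : g 0 = 0)
    (hg : ∀ z : ℂ, z ≠ 0 → g z = (‖z‖ ^ (p / r - 1) : ℝ) * z) :
    g '' polySpiral r = polySpiral p ∧
      polySpiral r ⊆ Metric.closedBall (0 : ℂ) ((2 * Real.pi) ^ (-r)) ∧
      (∃ C > 0, ∀ z ∈ Metric.closedBall (0 : ℂ) ((2 * Real.pi) ^ (-r)),
        ∀ w ∈ Metric.closedBall (0 : ℂ) ((2 * Real.pi) ^ (-r)),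
          ‖g z - g w‖ ≤ C * ‖z - w‖) := by
  have hα : 0 ≤ p / r - 1 := sub_nonneg.mpr ((one_le_div hr).mpr hrp)
  obtain rfl : g = radialStretch (p / r - 1) := funext fun z => by
    rcases eq_or_ne z 0 with rfl | hz
    · simp [hg0, radialStretch]
    · rw [hg z hz, radialStretch, Complex.real_smul]
  refine ⟨image_radialStretch_polySpiral hr.ne', polySpiral_subset_closedBall hr.le,
    (1 + (p / r - 1)) * ((2 * π) ^ (-r)) ^ (p / r - 1), by positivity, fun z hz w hw => ?_⟩
  rw [mem_closedBall_zero_iff] at hz hw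
  exact norm_radialStretch_sub_le hα hz hw

/-- For `0 < r ≤ p ≤ 1`, the radial stretch `g(z) = |z|^{p/r - 1} z`, `g(0) = 0`,
maps `S_r` onto `S_p`, and is Lipschitz on the closed disk of radius `(2π)^{-r}`
centered at `0`, a disk which contains `S_r`. -/
theorem radialStretch_lipschitz_maps_polySpiral (p r : ℝ) (hr : 0 < r) (hrp : r ≤ p) (hp : p ≤ 1)
    (g : ℂ → ℂ) (hg0 : g 0 = 0)
    (hg : ∀ z : ℂ, z ≠ 0 → g z = (‖z‖ ^ (p / r - 1) : ℝ) * z) :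
    g '' polySpiral r = polySpiral p ∧
      polySpiral r ⊆ Metric.closedBall (0 : ℂ) ((2 * Real.pi) ^ (-r)) ∧
      (∃ C > 0, ∀ z ∈ Metric.closedBall (0 : ℂ) ((2 * Real.pi) ^ (-r)),
        ∀ w ∈ Metric.closedBall (0 : ℂ) ((2 * Real.pi) ^ (-r)),
          ‖g z - g w‖ ≤ C * ‖z - w‖) :=
  radialStretch_lipschitz_maps_polySpiral_general p r hr hrp g hg0 hg
end

section
/- Let 0 < r ≤ p ≤ 1 and α ∈ (0, 1]. If h : S_p → S_r is a surjective α-Hölder map, i.e., there is C > 0 with |h(z) − h(w)| ≤ C|z − w|^α for all z, w ∈ S_p and h(S_p) = S_r, then α ≤ r/p. -/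
/-!
Suppose `α > r / p` and write `z t = t ^ (-p) e^{it}`. The points `(π n) ^ (-r) e^{iπn}` of `S_r`
lie alternately on the two real half-axes, so two of them with consecutive indices `n, n + 1 ≤ N`
are at distance at least `(π N) ^ (-r)`. As `t ↦ ‖h (z t)‖` is continuous and (by surjectivity)
reaches one of any two consecutive levels `(π n) ^ (-r)`, the intermediate value theorem
yields times `u 0 ≤ u 1 ≤ ⋯` at which `h ∘ z` visits about `N` of these points with consecutive indices, and
Hölder continuity makes every chord `z (u k) z (u (k + 1))` longer than
`δ = ((π N) ^ (-r) / C) ^ (1 / α)`. A chord starting at time `u` is shorter than `2 u ^ (-p)`,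
so all these times are below `(2 / δ) ^ (1 / p)`, whereas the arc of `z` up to time `T` has length
`O(T ^ (1 - q))` for any `q ≤ p` with `q < 1`. Hence `N δ ^ (1 + (1 - q) / p) = O(1)`, i.e.
`N ^ (1 - (r / α) (1 + (1 - q) / p)) = O(1)`, which fails for `q` close to `p` since `r / α < p`.
-/

open Real Set Filter Topology

lemma exists_monotone_forall_eq_of_continuousOn {α δ : Type*}
    [ConditionallyCompleteLinearOrder α] [TopologicalSpace α] [OrderTopology α]
    [DenselyOrdered α] [LinearOrder δ] [TopologicalSpace δ] [OrderClosedTopology δ]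
    {f : α → δ} {y : ℕ → δ} {a b : α} (K : ℕ) (hy : MonotoneOn y (Iic K)) (hab : a ≤ b)
    (hf : ContinuousOn f (Icc a b)) (ha : f a ≤ y 0) (hb : y K ≤ f b) :
    ∃ u : ℕ → α, Monotone u ∧ (∀ k, u k ∈ Icc a b) ∧ ∀ k ≤ K, f (u k) = y k := by
  induction K generalizing a y with
  | zero =>
    obtain ⟨c, hc, hfc⟩ := intermediate_value_Icc hab hf ⟨ha, hb⟩
    exact ⟨fun _ => c, monotone_const, fun _ => hc, fun k hk => by rwa [Nat.le_zero.1 hk]⟩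
  | succ K ih =>
    obtain ⟨c, hc, hfc⟩ :=
      intermediate_value_Icc hab hf ⟨ha, (hy (Nat.zero_le _) self_mem_Iic (Nat.zero_le _)).trans hb⟩
    obtain ⟨u, hu, huI, hfu⟩ := ih (y := fun k => y (k + 1))
      (fun i hi j hj hij => hy (Nat.succ_le_succ hi) (Nat.succ_le_succ hj) (by omega)) hc.2
      (hf.mono (Icc_subset_Icc_left hc.1))
      (hfc.trans_le (hy (Nat.zero_le _) (by simp) (Nat.zero_le 1))) hb
    refine ⟨fun k => if k = 0 then c else u (k - 1), monotone_nat_of_le_succ fun k => ?_,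
      fun k => ?_, fun k hk => ?_⟩
    · rcases k with _ | k
      · simpa using (huI 0).1
      · simpa using hu k.le_succ
    · dsimp only
      split_ifs
      · exact hc
      · exact Icc_subset_Icc_left hc.1 (huI _)
    · rcases k with _ | k
      · simpa using hfc
      · simpa using hfu k (by omega)

lemma holderOnWith_of_norm_sub_le {E F : Type*} [SeminormedAddCommGroup E]
    [SeminormedAddCommGroup F] {C α : NNReal} {f : E → F} {s : Set E}
    (hf : ∀ x ∈ s, ∀ y ∈ s, ‖f x - f y‖ ≤ C * ‖x - y‖ ^ (α : ℝ)) : HolderOnWith C α f s := by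
  intro x hx y hy
  rw [edist_nndist, edist_nndist, ← ENNReal.coe_rpow_of_nonneg _ α.coe_nonneg, ← ENNReal.coe_mul,
    ENNReal.coe_le_coe, ← NNReal.coe_le_coe]
  simpa [dist_eq_norm] using hf x hx y hy

lemma div_rpow_inv_le_norm_sub {E F : Type*} [SeminormedAddCommGroup E]
    [SeminormedAddCommGroup F] {C α ε : ℝ} (hC : 0 < C) (hα : 0 < α) (hε : 0 ≤ ε) {f : E → F}
    {x y : E} (hf : ‖f x - f y‖ ≤ C * ‖x - y‖ ^ α) (hεf : ε ≤ ‖f x - f y‖) :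
    (ε / C) ^ α⁻¹ ≤ ‖x - y‖ := by
  rw [rpow_inv_le_iff_of_pos (by positivity) (norm_nonneg _) hα, div_le_iff₀' hC]
  exact hεf.trans hf

lemma tendsto_mul_rpow_neg_atTop {s a c : ℝ} (hs0 : 0 ≤ s) (hs1 : s < 1) (ha : 0 < a)
    (hc : 0 ≤ c) : Tendsto (fun x : ℝ => x * (a * (x + c)) ^ (-s)) atTop atTop := by
  refine tendsto_atTop_mono' _ ?_
    ((tendsto_rpow_atTop (sub_pos.2 hs1)).const_mul_atTop (by positivity : 0 < (2 * a) ^ (-s)))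
  filter_upwards [eventually_ge_atTop c, eventually_gt_atTop 0] with x hxc hx
  calc (2 * a) ^ (-s) * x ^ (1 - s) = x * (2 * a * x) ^ (-s) := by
        rw [mul_rpow (by positivity) hx.le, rpow_sub hx, rpow_one, rpow_neg hx.le]
        field_simp
    _ ≤ x * (a * (x + c)) ^ (-s) := by
        refine mul_le_mul_of_nonneg_left ?_ hx.le
        exact rpow_le_rpow_of_nonpos (by positivity) (by nlinarith) (neg_nonpos.2 hs0)

section SpiralGeometry

variable {e : ℝ}

lemma norm_spiralMap_rpow_neg (e : ℝ) {t : ℝ} (ht : 0 < t) :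
    ‖spiralMap (· ^ (-e)) t‖ = t ^ (-e) := by
  simp [spiralMap, Complex.norm_exp, abs_of_nonneg (rpow_nonneg ht.le _)]

lemma spiralMap_mem_polySpiral (e : ℝ) {t : ℝ} (ht : 2 * π ≤ t) :
    spiralMap (· ^ (-e)) t ∈ polySpiral e :=
  Or.inl ⟨t, ht, rfl⟩

lemma eq_spiralMap_of_mem_polySpiral_of_norm_eq (he : e ≠ 0) {w : ℂ} (hw : w ∈ polySpiral e)
    {s : ℝ} (hs : 2 * π ≤ s) (hws : ‖w‖ = s ^ (-e)) : w = spiralMap (· ^ (-e)) s := by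
  have hs0 : 0 < s := two_pi_pos.trans_le hs
  rcases hw with ⟨t, ht, rfl⟩ | rfl
  · have ht0 : 0 < t := two_pi_pos.trans_le ht
    rw [norm_spiralMap_rpow_neg e ht0] at hws
    rw [rpow_left_injOn (neg_ne_zero.2 he) ht0.le hs0.le hws]
  · exact absurd hws (by rw [norm_zero]; exact (rpow_pos_of_pos hs0 _).ne)

lemma norm_spiralMap_sub_spiralMap_add_pi (e : ℝ) {t : ℝ} (ht : 0 < t) :
    ‖spiralMap (· ^ (-e)) t - spiralMap (· ^ (-e)) (t + π)‖ = t ^ (-e) + (t + π) ^ (-e) := by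
  have : spiralMap (· ^ (-e)) t - spiralMap (· ^ (-e)) (t + π)
      = ((t ^ (-e) + (t + π) ^ (-e) : ℝ) : ℂ) * Complex.exp (t * Complex.I) := by
    simp only [spiralMap]
    push_cast
    rw [add_mul, Complex.exp_add, Complex.exp_pi_mul_I]
    ring
  rw [this, norm_mul, Complex.norm_exp_ofReal_mul_I, mul_one, Complex.norm_real,
    norm_of_nonneg (by positivity)]

lemma two_pi_le_pi_mul {n : ℕ} (hn : 2 ≤ n) : 2 * π ≤ π * n := by
  rw [mul_comm]
  gcongr
  exact_mod_cast hn

lemma norm_sub_eq_of_mem_polySpiral (he : e ≠ 0) {w w' : ℂ} (hw : w ∈ polySpiral e)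
    (hw' : w' ∈ polySpiral e) {n : ℕ} (hn : 2 ≤ n) (hwn : ‖w‖ = (π * n) ^ (-e))
    (hw'n : ‖w'‖ = (π * (n + 1)) ^ (-e)) :
    ‖w - w'‖ = (π * n) ^ (-e) + (π * (n + 1)) ^ (-e) := by
  have hn' := two_pi_le_pi_mul hn
  rw [mul_add_one] at hw'n ⊢
  rw [eq_spiralMap_of_mem_polySpiral_of_norm_eq he hw hn' hwn,
    eq_spiralMap_of_mem_polySpiral_of_norm_eq he hw' (hn'.trans (by linarith [pi_pos])) hw'n,
    norm_spiralMap_sub_spiralMap_add_pi e (two_pi_pos.trans_le hn')]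

lemma hasDerivAt_spiralMap_rpow_neg (e : ℝ) {t : ℝ} (ht : 0 < t) :
    HasDerivAt (spiralMap (· ^ (-e))) ((Complex.I - e / t) * spiralMap (· ^ (-e)) t) t := by
  have hmod : HasDerivAt (fun s : ℝ => ((s ^ (-e) : ℝ) : ℂ)) ((-e * t ^ (-e - 1) : ℝ) : ℂ) t :=
    (hasDerivAt_rpow_const (Or.inl ht.ne')).ofReal_comp
  have hrot : HasDerivAt (fun s : ℝ => Complex.exp (s * Complex.I))
      (Complex.exp (t * Complex.I) * Complex.I) t := by
    simpa using (((hasDerivAt_id (t : ℂ)).mul_const Complex.I).cexp).comp_ofReal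
  refine (hmod.mul hrot).congr_deriv ?_
  rw [rpow_sub_one ht.ne', spiralMap]
  push_cast
  field_simp
  ring

lemma continuousOn_spiralMap_rpow_neg (e : ℝ) :
    ContinuousOn (spiralMap (· ^ (-e))) (Ici (2 * π)) := fun _ ht =>
  (hasDerivAt_spiralMap_rpow_neg e (two_pi_pos.trans_le ht)).continuousAt.continuousWithinAt

lemma norm_spiralMap_sub_le_two_mul {s t : ℝ} (he : 0 ≤ e) (hs : 0 < s) (hst : s ≤ t) :
    ‖spiralMap (· ^ (-e)) t - spiralMap (· ^ (-e)) s‖ ≤ 2 * s ^ (-e) := by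
  have hdecr : t ^ (-e) ≤ s ^ (-e) := rpow_le_rpow_of_nonpos hs hst (neg_nonpos.2 he)
  calc _ ≤ ‖spiralMap (· ^ (-e)) t‖ + ‖spiralMap (· ^ (-e)) s‖ := norm_sub_le _ _
    _ ≤ 2 * s ^ (-e) := by
      rw [norm_spiralMap_rpow_neg e (hs.trans_le hst), norm_spiralMap_rpow_neg e hs]
      linarith

lemma norm_spiralMap_sub_le (he0 : 0 < e) (he1 : e ≤ 1) {q : ℝ} (hqe : q ≤ e) (hq1 : q < 1)
    {a b : ℝ} (ha : 1 ≤ a) (hab : a ≤ b) :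
    ‖spiralMap (· ^ (-e)) b - spiralMap (· ^ (-e)) a‖
      ≤ 2 / (1 - q) * b ^ (1 - q) - 2 / (1 - q) * a ^ (1 - q) := by
  have hpos : ∀ x ∈ Icc a b, 0 < x := fun x hx => one_pos.trans_le (ha.trans hx.1)
  have hz : ∀ x ∈ Icc a b, HasDerivAt (fun y => spiralMap (· ^ (-e)) y - spiralMap (· ^ (-e)) a)
      ((Complex.I - e / x) * spiralMap (· ^ (-e)) x) x := fun x hx =>
    (hasDerivAt_spiralMap_rpow_neg e (hpos x hx)).sub_const _
  have hF : ∀ x ∈ Icc a b,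
      HasDerivAt (fun y => 2 / (1 - q) * y ^ (1 - q) - 2 / (1 - q) * a ^ (1 - q))
        (2 * x ^ (-q)) x := by
    intro x hx
    refine (((hasDerivAt_rpow_const (Or.inl (hpos x hx).ne')).const_mul _).sub_const _)
      |>.congr_deriv ?_
    rw [sub_sub_cancel_left]
    field_simp [(sub_pos.2 hq1).ne']
  have hspeed : ∀ x ∈ Icc a b, ‖(Complex.I - e / x) * spiralMap (· ^ (-e)) x‖ ≤ 2 * x ^ (-q) := by
    intro x hx
    have hx1 : 1 ≤ x := ha.trans hx.1
    have hrot : ‖Complex.I - e / x‖ ≤ 2 := by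
      have : e / x ≤ 1 := (div_le_one (hpos x hx)).2 (he1.trans hx1)
      calc ‖Complex.I - e / x‖ ≤ ‖Complex.I‖ + ‖(e / x : ℂ)‖ := norm_sub_le _ _
        _ ≤ 2 := by
          rw [Complex.norm_I, ← Complex.ofReal_div, Complex.norm_real,
            norm_of_nonneg (div_nonneg he0.le (hpos x hx).le)]
          linarith
    rw [norm_mul, norm_spiralMap_rpow_neg e (hpos x hx)]
    gcongr
  refine image_norm_le_of_norm_deriv_right_le_deriv_boundary'
    (fun x hx => (hz x hx).continuousAt.continuousWithinAt)
    (fun x hx => (hz x (Ico_subset_Icc_self hx)).hasDerivWithinAt) (by simp)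
    (fun x hx => (hF x hx).continuousAt.continuousWithinAt)
    (fun x hx => (hF x (Ico_subset_Icc_self hx)).hasDerivWithinAt)
    (fun x hx => hspeed x (Ico_subset_Icc_self hx)) (right_mem_Icc.2 hab)

lemma natCast_mul_le_of_separated (he0 : 0 < e) (he1 : e ≤ 1) {q : ℝ} (hqe : q ≤ e)
    (hq1 : q < 1) {u : ℕ → ℝ} (hu : Monotone u) (hu0 : 1 ≤ u 0) {δ : ℝ} {K : ℕ}
    (hsep : ∀ k < K, δ ≤ ‖spiralMap (· ^ (-e)) (u (k + 1)) - spiralMap (· ^ (-e)) (u k)‖) :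
    K * δ ≤ 2 / (1 - q) * u K ^ (1 - q) - 2 / (1 - q) * u 0 ^ (1 - q) := by
  induction K with
  | zero => simp
  | succ K ih =>
    have hchord := (hsep K K.lt_succ_self).trans
      (norm_spiralMap_sub_le he0 he1 hqe hq1 (hu0.trans (hu (Nat.zero_le K))) (hu K.le_succ))
    push_cast
    linarith [ih fun k hk => hsep k (hk.trans K.lt_succ_self)]

lemma natCast_mul_rpow_le_of_separated (he0 : 0 < e) (he1 : e ≤ 1) {q : ℝ} (hqe : q ≤ e)
    (hq1 : q < 1) {u : ℕ → ℝ} (hu : Monotone u) (hu0 : 1 ≤ u 0) {δ : ℝ} (hδ : 0 < δ) {K : ℕ}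
    (hsep : ∀ k ≤ K, δ ≤ ‖spiralMap (· ^ (-e)) (u (k + 1)) - spiralMap (· ^ (-e)) (u k)‖) :
    K * δ ^ (1 + (1 - q) / e) ≤ 2 / (1 - q) * 2 ^ ((1 - q) / e) := by
  have huK : 0 < u K := one_pos.trans_le (hu0.trans (hu (Nat.zero_le K)))
  have hq : 0 < 1 - q := sub_pos.2 hq1
  -- The chord after `u K` has length at least `δ` and at most `2 (u K) ^ (-e)`.
  have hlast : u K ^ e ≤ 2 / δ := by
    have := (hsep K le_rfl).trans (norm_spiralMap_sub_le_two_mul he0.le huK (hu K.le_succ))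
    rw [rpow_neg huK.le, ← div_eq_mul_inv, le_div_iff₀ (rpow_pos_of_pos huK e)] at this
    rwa [le_div_iff₀ hδ, mul_comm]
  have hlen : K * δ ≤ 2 / (1 - q) * (2 / δ) ^ ((1 - q) / e) := by
    have hpow : u K ^ (1 - q) = (u K ^ e) ^ ((1 - q) / e) := by
      rw [← rpow_mul huK.le, mul_div_cancel₀ _ he0.ne']
    have hu0q : 0 ≤ 2 / (1 - q) * u 0 ^ (1 - q) := by positivity
    calc K * δ ≤ 2 / (1 - q) * u K ^ (1 - q) := by
          linarith [natCast_mul_le_of_separated he0 he1 hqe hq1 hu hu0 fun k hk => hsep k hk.le]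
      _ ≤ 2 / (1 - q) * (2 / δ) ^ ((1 - q) / e) := by
          rw [hpow]
          gcongr
  calc K * δ ^ (1 + (1 - q) / e) = K * δ * δ ^ ((1 - q) / e) := by
        rw [rpow_add hδ, rpow_one, mul_assoc]
    _ ≤ 2 / (1 - q) * (2 / δ) ^ ((1 - q) / e) * δ ^ ((1 - q) / e) := by
        gcongr
    _ = 2 / (1 - q) * 2 ^ ((1 - q) / e) := by
        rw [div_rpow zero_le_two hδ.le]
        field_simp

end SpiralGeometry

section SurjectiveHolder

variable {p r : ℝ} {h : ℂ → ℂ}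

lemma exists_norm_mem_Icc (hr : 0 < r) (hsurj : h '' polySpiral p = polySpiral r) {n : ℕ}
    (hn : 2 ≤ n) : ∃ t, 2 * π ≤ t ∧
      ‖h (spiralMap (· ^ (-p)) t)‖ ∈ Icc ((π * (n + 1)) ^ (-r)) ((π * n) ^ (-r)) := by
  have hn₀ : 0 < π * n := two_pi_pos.trans_le (two_pi_le_pi_mul hn)
  have hn₁ : π * n < π * (n + 1) := by linarith [pi_pos]
  have hanti : (π * (n + 1)) ^ (-r) ≤ (π * n) ^ (-r) :=
    rpow_le_rpow_of_nonpos hn₀ hn₁.le (neg_nonpos.2 hr.le)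
  obtain ⟨x, hx, hxw⟩ : spiralMap (· ^ (-r)) (π * n) ∈ h '' polySpiral p :=
    hsurj ▸ spiralMap_mem_polySpiral r (two_pi_le_pi_mul hn)
  obtain ⟨x', hx', hx'w⟩ : spiralMap (· ^ (-r)) (π * (n + 1)) ∈ h '' polySpiral p :=
    hsurj ▸ spiralMap_mem_polySpiral r ((two_pi_le_pi_mul hn).trans hn₁.le)
  rcases hx with ⟨t, ht, rfl⟩ | rfl
  · exact ⟨t, ht, by rw [hxw, norm_spiralMap_rpow_neg r hn₀]; exact ⟨hanti, le_rfl⟩⟩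
  rcases hx' with ⟨t, ht, rfl⟩ | rfl
  · exact ⟨t, ht, by rw [hx'w, norm_spiralMap_rpow_neg r (hn₀.trans hn₁)]; exact ⟨le_rfl, hanti⟩⟩
  -- Otherwise both points are `h 0`, yet their moduli differ.
  have hnorm := congrArg norm (hxw.symm.trans hx'w)
  rw [norm_spiralMap_rpow_neg r hn₀, norm_spiralMap_rpow_neg r (hn₀.trans hn₁)] at hnorm
  exact absurd (rpow_left_injOn (neg_ne_zero.2 hr.ne') hn₀.le (hn₀.trans hn₁).le hnorm) hn₁.ne

lemma rpow_neg_le_norm_sub_of_norm_eq (hr : 0 < r)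
    (hmaps : MapsTo h (polySpiral p) (polySpiral r)) {s t : ℝ} (hs : 2 * π ≤ s) (ht : 2 * π ≤ t)
    {n N : ℕ} (hn : 2 ≤ n) (hnN : n + 1 ≤ N)
    (hsn : ‖h (spiralMap (· ^ (-p)) s)‖ = (π * n) ^ (-r))
    (htn : ‖h (spiralMap (· ^ (-p)) t)‖ = (π * (n + 1)) ^ (-r)) :
    (π * N) ^ (-r) ≤ ‖h (spiralMap (· ^ (-p)) s) - h (spiralMap (· ^ (-p)) t)‖ := by
  rw [norm_sub_eq_of_mem_polySpiral hr.ne' (hmaps (spiralMap_mem_polySpiral p hs))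
    (hmaps (spiralMap_mem_polySpiral p ht)) hn hsn htn]
  have hN : (π * N) ^ (-r) ≤ (π * (n + 1)) ^ (-r) :=
    rpow_le_rpow_of_nonpos (by positivity) (by gcongr; exact_mod_cast hnN) (neg_nonpos.2 hr.le)
  have : 0 ≤ (π * n) ^ (-r) := by positivity
  linarith

lemma exists_monotone_separated_chain (hr : 0 < r) (hsurj : h '' polySpiral p = polySpiral r)
    (hm : ContinuousOn (fun t => ‖h (spiralMap (· ^ (-p)) t)‖) (Ici (2 * π))) (K : ℕ) :
    ∃ u : ℕ → ℝ, Monotone u ∧ 2 * π ≤ u 0 ∧ ∀ k ≤ K, (π * (K + 4)) ^ (-r) ≤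
      ‖h (spiralMap (· ^ (-p)) (u (k + 1))) - h (spiralMap (· ^ (-p)) (u k))‖ := by
  set m : ℝ → ℝ := fun t => ‖h (spiralMap (· ^ (-p)) t)‖
  set ρ : ℕ → ℝ := fun n => (π * n) ^ (-r)
  have hρ : ∀ {i j : ℕ}, 1 ≤ i → i ≤ j → ρ j ≤ ρ i := fun hi hij =>
    rpow_le_rpow_of_nonpos (by positivity) (by gcongr) (neg_nonpos.2 hr.le)
  have hmaps : MapsTo h (polySpiral p) (polySpiral r) := hsurj ▸ mapsTo_image h _
  have hsep : ∀ {s t : ℝ}, 2 * π ≤ s → 2 * π ≤ t → ∀ n : ℕ, 2 ≤ n → n + 1 ≤ K + 4 →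
      m s = ρ n → m t = ρ (n + 1) →
      (π * (K + 4)) ^ (-r) ≤ ‖h (spiralMap (· ^ (-p)) s) - h (spiralMap (· ^ (-p)) t)‖ := by
    intro s t hs ht n hn hnN hsn htn
    have := rpow_neg_le_norm_sub_of_norm_eq hr hmaps hs ht hn hnN hsn (by simpa [ρ] using htn)
    simpa using this
  obtain ⟨a, ha, hma, -⟩ := exists_norm_mem_Icc hr hsurj (n := 2) le_rfl
  obtain ⟨b, hb, -, hmb⟩ := exists_norm_mem_Icc hr hsurj (n := K + 4) (by omega)
  replace hma : ρ 3 ≤ m a := by norm_num [ρ, m] at hma ⊢; exact hma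
  rcases le_total a b with hab | hba
  · -- On `[a, b]`, `m` descends through the levels `ρ 3, ρ 4, …, ρ (K + 4)` in this order.
    obtain ⟨u, hu, huI, hmu⟩ := exists_monotone_forall_eq_of_continuousOn (f := fun t => -m t)
      (y := fun k => -ρ (k + 3)) (K + 1) (fun i _ j _ hij => neg_le_neg (hρ (by omega) (by omega)))
      hab (hm.mono fun t ht => ha.trans ht.1).neg (neg_le_neg hma) (neg_le_neg hmb)
    refine ⟨u, hu, ha.trans (huI 0).1, fun k hk => ?_⟩
    rw [norm_sub_rev]
    exact hsep (ha.trans (huI k).1) (ha.trans (huI (k + 1)).1) (k + 3) (by omega) (by omega)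
      (neg_inj.1 (hmu k (by omega))) (neg_inj.1 (hmu (k + 1) (by omega)))
  · -- On `[b, a]`, `m` ascends through the levels `ρ (K + 4), …, ρ 4, ρ 3` in this order.
    obtain ⟨u, hu, huI, hmu⟩ := exists_monotone_forall_eq_of_continuousOn (f := m)
      (y := fun k => ρ (K + 4 - k)) (K + 1)
      (fun i _ j hj hij => hρ (by simp only [mem_Iic] at hj; omega) (by omega))
      hba (hm.mono fun t ht => hb.trans ht.1) hmb (by simpa [show K + 4 - (K + 1) = 3 by omega])
    refine ⟨u, hu, hb.trans (huI 0).1, fun k hk => ?_⟩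
    refine hsep (hb.trans (huI (k + 1)).1) (hb.trans (huI k).1) (K + 3 - k) (by omega) (by omega)
      ?_ ?_
    · rw [hmu (k + 1) (by omega)]; congr 1; omega
    · rw [hmu k (by omega)]; congr 1; omega

end SurjectiveHolder

lemma tendsto_natCast_mul_rpow_neg_div_rpow {r α C θ : ℝ} (hr : 0 < r) (hα : 0 < α) (hC : 0 < C)
    (hθ : 0 < θ) (hs : r / α * θ < 1) :
    Tendsto (fun K : ℕ => K * (((π * (K + 4)) ^ (-r) / C) ^ α⁻¹) ^ θ) atTop atTop := by
  have hrpow : ∀ x : ℝ, 0 < x →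
      ((x ^ (-r) / C) ^ α⁻¹) ^ θ = x ^ (-(r / α * θ)) / (C ^ α⁻¹) ^ θ := by
    intro x hx
    rw [div_rpow (by positivity) hC.le, div_rpow (by positivity) (by positivity),
      ← rpow_mul hx.le, ← rpow_mul hx.le]
    ring_nf
  have hlim := ((tendsto_mul_rpow_neg_atTop (by positivity) hs pi_pos zero_le_four).comp
    tendsto_natCast_atTop_atTop).atTop_div_const (by positivity : 0 < (C ^ α⁻¹) ^ θ)
  refine hlim.congr fun K => ?_
  simp only [Function.comp_apply, hrpow _ (by positivity : 0 < π * (K + 4)), mul_div_assoc]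

lemma exists_le_lt_one_mul_one_add_div_lt_one {β p : ℝ} (hβ : 0 < β) (hβp : β < p)
    (hp : p ≤ 1) : ∃ q ≤ p, q < 1 ∧ β * (1 + (1 - q) / p) < 1 := by
  have hp0 : 0 < p := hβ.trans hβp
  have hε : 0 < (p - β) / (2 * β) := div_pos (sub_pos.2 hβp) (by positivity)
  refine ⟨p - (p - β) / (2 * β), by linarith, by linarith, ?_⟩
  rw [show β * (1 + (1 - (p - (p - β) / (2 * β))) / p) = (p + β) / (2 * p) by
    field_simp; ring, div_lt_one (by positivity)]
  linarith

theorem holder_exponent_le_of_polySpiral_surjective_general (p r α : ℝ)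
    (hr : 0 < r) (hrp : r ≤ p) (hp : p ≤ 1) (hα0 : 0 < α)
    (h : ℂ → ℂ) (hsurj : h '' polySpiral p = polySpiral r)
    (C : ℝ) (hC : 0 < C)
    (hHol : ∀ z ∈ polySpiral p, ∀ w ∈ polySpiral p,
      ‖h z - h w‖ ≤ C * ‖z - w‖ ^ α) :
    α ≤ r / p := by
  by_contra! hlt
  have hp0 : 0 < p := hr.trans_le hrp
  have hβp : r / α < p := by rwa [div_lt_comm₀ hα0 hp0]
  obtain ⟨q, hqp, hq1, hs⟩ := exists_le_lt_one_mul_one_add_div_lt_one (div_pos hr hα0) hβp hp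
  have hm : ContinuousOn (fun t => ‖h (spiralMap (· ^ (-p)) t)‖) (Ici (2 * π)) :=
    ((holderOnWith_of_norm_sub_le (C := ⟨C, hC.le⟩) (α := ⟨α, hα0.le⟩) hHol).continuousOn
      hα0).norm.comp (continuousOn_spiralMap_rpow_neg p) fun _ => spiralMap_mem_polySpiral p
  have hbound : ∀ K : ℕ, K * ((((π * (K + 4)) ^ (-r) / C) ^ α⁻¹) ^ (1 + (1 - q) / p))
      ≤ 2 / (1 - q) * 2 ^ ((1 - q) / p) := by
    intro K
    obtain ⟨u, hu, hu0, hsep⟩ := exists_monotone_separated_chain hr hsurj hm K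
    refine natCast_mul_rpow_le_of_separated hp0 hp hqp hq1 hu
      (by linarith [two_pi_pos, pi_gt_three]) (by positivity) fun k hk => ?_
    exact div_rpow_inv_le_norm_sub hC hα0 (by positivity)
      (hHol _ (spiralMap_mem_polySpiral p (hu0.trans (hu (Nat.zero_le _))))
        _ (spiralMap_mem_polySpiral p (hu0.trans (hu (Nat.zero_le _))))) (hsep k hk)
  obtain ⟨K, hK⟩ := ((tendsto_natCast_mul_rpow_neg_div_rpow hr hα0 hC (by positivity) hs)
    |>.eventually_gt_atTop (2 / (1 - q) * 2 ^ ((1 - q) / p))).exists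
  exact (hbound K).not_gt hK

/-- For `0 < r ≤ p ≤ 1`, every surjective `α`-Hölder map `h : S_p → S_r`
satisfies `α ≤ r / p`. -/
theorem holder_exponent_le_of_polySpiral_surjective (p r α : ℝ)
    (hr : 0 < r) (hrp : r ≤ p) (hp : p ≤ 1) (hα0 : 0 < α) (hα1 : α ≤ 1)
    (h : ℂ → ℂ) (hsurj : h '' polySpiral p = polySpiral r)
    (C : ℝ) (hC : 0 < C)
    (hHol : ∀ z ∈ polySpiral p, ∀ w ∈ polySpiral p,
      ‖h z - h w‖ ≤ C * ‖z - w‖ ^ α) :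
    α ≤ r / p :=
  holder_exponent_le_of_polySpiral_surjective_general p r α hr hrp hp hα0 h hsurj C hC hHol
end
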